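/- There exists a positive constant C with C ≤ 2.32 such that the following holds. For every number of actions N ≥ 1, every discount factor α with 0 < α < 1/(800·ln(C·N)), every sequence of gains g_i^j ∈ [−1,1] chosen by Nature, and every round j ≥ 0, the average potential of the NormalHedge regrets satisfies (1/N)·Σ_{i=1}^N Φ(√α · R_i^j) < C. -/

import Mathlib

open Finset

/-- The NormalHedge potential function: `Φ(x) = exp(x²/8)` for `x > 0`, `1` for `x ≤ 0`. -/
noncomputable def Phi (x : ℝ) : ℝ := if 0 < x then Real.exp (x ^ 2 / 8) else 1

/-- NormalHedge weight for regret `R`: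
`w = R·exp(α·R²/8)` if `R > 0`, and `0` if `R ≤ 0`. -/
noncomputable def nhWeight (α R : ℝ) : ℝ :=
  if 0 < R then R * Real.exp (α * R ^ 2 / 8) else 0

/-- NormalHedge probability on action `i` given current regrets `R`:
normalized weights if the weight sum is positive, uniform otherwise. -/
noncomputable def nhProb {N : ℕ} (α : ℝ) (R : Fin N → ℝ) (i : Fin N) : ℝ :=
  if 0 < ∑ k, nhWeight α (R k) then nhWeight α (R i) / ∑ k, nhWeight α (R k)
  else 1 / N

/-- NormalHedge regrets: `R_i^0 = 0`, `R_i^{j+1} = (1-α)·R_i^j + g_i^j - g_A^j` where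
`g_A^j = Σ_i p_i^j · g_i^j`. Here `g j i` is the gain of action `i` in round `j`. -/
noncomputable def nhRegret {N : ℕ} (α : ℝ) (g : ℕ → Fin N → ℝ) : ℕ → Fin N → ℝ
  | 0 => fun _ => 0
  | j + 1 => fun i =>
      (1 - α) * nhRegret α g j i + g j i -
        ∑ k, nhProb α (nhRegret α g j) k * g j k

/-!
Take `C = 2` and show that the potential `S = ∑ i, Φ(√α R_i)` stays below `2N`. While it does,
every positive regret has `α R² / 8 < log (2N)`, so `α R < 1/10`, and a second-order expansion
of `exp` bounds the new `Φ_i` by `Φ_i + (1-α)α/4 · w_i (g_i - g_A) + 17α/20 · (2 - Φ_i)`. Since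
`p` is proportional to `w`, the linear terms sum to zero, leaving
`S' ≤ S + 17α/20 · (2N - S) < 2N`.
-/

lemma one_le_Phi (x : ℝ) : 1 ≤ Phi x := by
  unfold Phi
  split_ifs
  · exact Real.one_le_exp (by positivity)
  · exact le_rfl

lemma Phi_sqrt_mul {α : ℝ} (hα : 0 < α) (x : ℝ) :
    Phi (Real.sqrt α * x) = if 0 < x then Real.exp (α * x ^ 2 / 8) else 1 := by
  have hs : 0 < Real.sqrt α := Real.sqrt_pos.2 hα
  unfold Phi
  by_cases hx : 0 < x
  · rw [if_pos hx, if_pos (mul_pos hs hx), mul_pow, Real.sq_sqrt hα.le]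
  · rw [if_neg hx, if_neg (not_lt.2 (mul_nonpos_of_nonneg_of_nonpos hs.le (not_lt.1 hx)))]

lemma nhWeight_nonneg (α R : ℝ) : 0 ≤ nhWeight α R := by
  unfold nhWeight
  split_ifs
  · positivity
  · exact le_rfl

section Probabilities

variable {N : ℕ} (α : ℝ) (R : Fin N → ℝ)

lemma nhProb_nonneg (i : Fin N) : 0 ≤ nhProb α R i := by
  unfold nhProb
  split_ifs with h
  · exact div_nonneg (nhWeight_nonneg _ _) h.le
  · positivity

lemma sum_nhProb_le_one : ∑ i, nhProb α R i ≤ 1 := by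
  unfold nhProb
  split_ifs with h
  · rw [← Finset.sum_div, div_self h.ne']
  · rcases Nat.eq_zero_or_pos N with rfl | hN
    · simp
    · simp [Finset.card_univ, hN.ne']

lemma abs_sum_nhProb_mul_le_one (g : Fin N → ℝ) (hg : ∀ i, |g i| ≤ 1) :
    |∑ i, nhProb α R i * g i| ≤ 1 :=
  calc |∑ i, nhProb α R i * g i| ≤ ∑ i, nhProb α R i * |g i| := by
        refine (Finset.abs_sum_le_sum_abs _ _).trans_eq (Finset.sum_congr rfl fun i _ => ?_)
        rw [abs_mul, abs_of_nonneg (nhProb_nonneg α R i)]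
    _ ≤ ∑ i, nhProb α R i :=
        Finset.sum_le_sum fun i _ => mul_le_of_le_one_right (nhProb_nonneg α R i) (hg i)
    _ ≤ 1 := sum_nhProb_le_one α R

lemma sum_nhWeight_mul_sub_eq_zero (g : Fin N → ℝ) :
    ∑ i, nhWeight α (R i) * (g i - ∑ k, nhProb α R k * g k) = 0 := by
  by_cases hW : 0 < ∑ k, nhWeight α (R k)
  · have hgA : ∑ k, nhProb α R k * g k =
        (∑ k, nhWeight α (R k) * g k) / ∑ k, nhWeight α (R k) := by
      simp only [nhProb, if_pos hW, div_mul_eq_mul_div, ← Finset.sum_div]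
    simp only [hgA, mul_sub, Finset.sum_sub_distrib, ← Finset.sum_mul]
    field_simp
    ring
  · have hzero : ∀ i ∈ Finset.univ, nhWeight α (R i) = 0 :=
      (Finset.sum_eq_zero_iff_of_nonneg fun i _ => nhWeight_nonneg α (R i)).1
        (le_antisymm (not_lt.1 hW) (Finset.sum_nonneg fun i _ => nhWeight_nonneg α (R i)))
    exact Finset.sum_eq_zero fun i hi => by rw [hzero i hi, zero_mul]

end Probabilities

lemma Real.exp_le_one_add_add_sq {t : ℝ} (ht : |t| ≤ 1 / 18) :
    Real.exp t ≤ 1 + t + 513 / 1000 * t ^ 2 := by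
  have h := Real.exp_bound (n := 3) (ht.trans (by norm_num)) (by norm_num)
  norm_num [Finset.sum_range_succ, Nat.factorial] at h
  have hcube : |t| ^ 3 ≤ 1 / 18 * t ^ 2 := by
    rw [pow_succ, ← sq_abs t]
    exact mul_le_mul_of_nonneg_left ht (sq_nonneg _) |>.trans_eq (mul_comm _ _)
  nlinarith [(abs_sub_le_iff.1 h).1]

lemma Real.sub_mul_exp_le (c u : ℝ) : (c - u) * Real.exp u ≤ Real.exp (c - 1) := by
  have h := mul_le_mul_of_nonneg_right (Real.add_one_le_exp (c - u - 1)) (Real.exp_pos u).le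
  rwa [sub_add_cancel, ← Real.exp_add, show c - u - 1 + u = c - 1 by ring] at h

lemma Real.exp_eleven_div_seventeen_le_two : Real.exp (11 / 17) ≤ 2 := by
  rw [← Real.le_log_iff_exp_le two_pos]
  linarith [Real.log_two_gt_d9]

/-- The exponent `α R² / 8` of the potential moves by `-a + b + c`, where `a` comes from the
discount, `b` is linear in the gain and `c` quadratic in it (see `exp_active_step_le`). -/
lemma Real.exp_add_increment_le {α u a b c : ℝ} (hα : 0 < α) (hα5 : α ≤ 1 / 500)
    (hu : 0 ≤ u) (hαu : α * u < 1 / 800) (hb : |b| ≤ 1 / 20) (hb2 : b ^ 2 ≤ 2 * (α * u))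
    (ha : 999 / 500 * (α * u) ≤ a) (ha' : a ≤ 2 * (α * u)) (hc : 0 ≤ c) (hc' : c ≤ α / 2) :
    Real.exp (u + (-a + b + c)) ≤ Real.exp u * (1 + b) + 17 / 20 * α * (2 - Real.exp u) := by
  obtain ⟨hbl, hbr⟩ := abs_le.1 hb
  have ha0 : 0 ≤ a := le_trans (by positivity) ha
  have ht : |-a + b + c| ≤ 1 / 18 := abs_le.2 ⟨by linarith, by linarith⟩
  have hsq : (-a + b + c) ^ 2 ≤ 2 * (α * u) + (a + c) * (1 / 10 + 7 / 2000) := by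
    nlinarith [mul_nonneg (by linarith : (0:ℝ) ≤ 1 / 20 - b) hc,
      mul_nonneg (by linarith : (0:ℝ) ≤ 1 / 20 + b) ha0, mul_nonneg ha0 hc]
  have hquad : (-a + b + c) + 513 / 1000 * (-a + b + c) ^ 2 ≤
      b + 11 / 20 * α - 17 / 20 * (α * u) := by nlinarith
  -- `(28/17 - u) e^u ≤ e^(11/17) ≤ 2`
  have hpot : Real.exp u * (28 - 17 * u) ≤ 34 := by
    nlinarith [Real.sub_mul_exp_le (28 / 17) u, Real.exp_eleven_div_seventeen_le_two]
  calc Real.exp (u + (-a + b + c))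
      = Real.exp u * Real.exp (-a + b + c) := Real.exp_add _ _
    _ ≤ Real.exp u * (1 + b + 11 / 20 * α - 17 / 20 * (α * u)) := by
        gcongr
        linarith [Real.exp_le_one_add_add_sq ht]
    _ ≤ Real.exp u * (1 + b) + 17 / 20 * α * (2 - Real.exp u) := by
        nlinarith [mul_nonneg hα.le (by linarith : (0:ℝ) ≤ 34 - Real.exp u * (28 - 17 * u))]

lemma exp_active_step_le {α R G : ℝ} (hα : 0 < α) (hα5 : α ≤ 1 / 500) (hG : |G| ≤ 2)
    (hR : 0 < R) (hαR : α * R < 1 / 10) :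
    Real.exp (α * ((1 - α) * R + G) ^ 2 / 8) ≤
      Real.exp (α * R ^ 2 / 8) * (1 + (1 - α) * α * R * G / 4)
        + 17 / 20 * α * (2 - Real.exp (α * R ^ 2 / 8)) := by
  have hP : 0 < α * R := mul_pos hα hR
  have hαu : α * (α * R ^ 2 / 8) = (α * R) ^ 2 / 8 := by ring
  have hb : (1 - α) * α * R * G / 4 = (1 - α) * (α * R) / 4 * G := by ring
  have hk0 : 0 ≤ (1 - α) * (α * R) / 4 := by nlinarith
  have hk : (1 - α) * (α * R) / 4 ≤ α * R / 4 := by nlinarith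
  have hG2 : G ^ 2 ≤ 4 := by nlinarith [sq_abs G, abs_nonneg G]
  have hexp := Real.exp_add_increment_le (u := α * R ^ 2 / 8)
    (a := (2 - α) * α * (α * R ^ 2 / 8)) (b := (1 - α) * α * R * G / 4) (c := α * G ^ 2 / 8)
    hα hα5 (by positivity) (by nlinarith)
    (by rw [hb, abs_mul, abs_of_nonneg hk0]; nlinarith [abs_nonneg G])
    (by rw [hαu, hb, mul_pow]; nlinarith [pow_le_pow_left₀ hk0 hk 2, sq_nonneg G])
    (by nlinarith) (by nlinarith) (by positivity) (by nlinarith)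
  convert hexp using 2
  ring

lemma Phi_inactive_step_le {α R G : ℝ} (hα : 0 < α) (hα5 : α ≤ 1 / 500) (hG : |G| ≤ 2)
    (hR : R ≤ 0) : Phi (Real.sqrt α * ((1 - α) * R + G)) ≤ 1 + 17 / 20 * α := by
  obtain ⟨hGl, hGr⟩ := abs_le.1 hG
  rw [Phi_sqrt_mul hα]
  split_ifs with hx
  · have hdiscount : (1 - α) * R ≤ 0 := mul_nonpos_of_nonneg_of_nonpos (by linarith) hR
    have hx2 : ((1 - α) * R + G) ^ 2 ≤ 4 := by nlinarith
    calc Real.exp (α * ((1 - α) * R + G) ^ 2 / 8)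
        ≤ Real.exp (α / 2) := Real.exp_le_exp.2 (by nlinarith)
      _ ≤ 1 + α / 2 + 513 / 1000 * (α / 2) ^ 2 :=
          Real.exp_le_one_add_add_sq (by rw [abs_of_pos (by positivity)]; linarith)
      _ ≤ 1 + 17 / 20 * α := by nlinarith
  · linarith

lemma Phi_step_le {α R G : ℝ} (hα : 0 < α) (hα5 : α ≤ 1 / 500) (hG : |G| ≤ 2)
    (hαR : α * R < 1 / 10) :
    Phi (Real.sqrt α * ((1 - α) * R + G)) ≤ Phi (Real.sqrt α * R)
      + (1 - α) * α / 4 * (nhWeight α R * G) + 17 / 20 * α * (2 - Phi (Real.sqrt α * R)) := by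
  by_cases hR : 0 < R
  · have hΦ : Phi (Real.sqrt α * ((1 - α) * R + G)) ≤
        Real.exp (α * ((1 - α) * R + G) ^ 2 / 8) := by
      rw [Phi_sqrt_mul hα]
      split_ifs
      exacts [le_rfl, Real.one_le_exp (by positivity)]
    rw [Phi_sqrt_mul hα R, if_pos hR, nhWeight, if_pos hR]
    linarith [exp_active_step_le hα hα5 hG hR hαR]
  · rw [Phi_sqrt_mul hα R, if_neg hR, nhWeight, if_neg hR]
    linarith [Phi_inactive_step_le hα hα5 hG (not_lt.1 hR)]

section Potential

variable {N : ℕ} {α : ℝ}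

noncomputable def nhUpdate (α : ℝ) (R g : Fin N → ℝ) : Fin N → ℝ :=
  fun i => (1 - α) * R i + (g i - ∑ k, nhProb α R k * g k)

lemma nhRegret_succ (g : ℕ → Fin N → ℝ) (j : ℕ) :
    nhRegret α g (j + 1) = nhUpdate α (nhRegret α g j) (g j) := by
  funext i
  simp only [nhRegret, nhUpdate]
  ring

noncomputable def nhPotential (α : ℝ) (R : Fin N → ℝ) : ℝ := ∑ i, Phi (Real.sqrt α * R i)

lemma nhPotential_zero : nhPotential α (fun _ : Fin N => 0) = N := by
  simp [nhPotential, Phi]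

lemma nhPotential_nhUpdate_le (hα : 0 < α) (hα5 : α ≤ 1 / 500) {R g : Fin N → ℝ}
    (hg : ∀ i, |g i| ≤ 1) (hR : ∀ i, α * R i < 1 / 10) :
    nhPotential α (nhUpdate α R g) ≤
      nhPotential α R + 17 / 20 * α * (2 * N - nhPotential α R) := by
  set gA := ∑ k, nhProb α R k * g k
  have hgA : |gA| ≤ 1 := abs_sum_nhProb_mul_le_one α R g hg
  have hG : ∀ i, |g i - gA| ≤ 2 := fun i => (abs_sub _ _).trans (by linarith [hg i])
  calc nhPotential α (nhUpdate α R g)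
      ≤ ∑ i, (Phi (Real.sqrt α * R i) + (1 - α) * α / 4 * (nhWeight α (R i) * (g i - gA))
          + 17 / 20 * α * (2 - Phi (Real.sqrt α * R i))) :=
        Finset.sum_le_sum fun i _ => Phi_step_le hα hα5 (hG i) (hR i)
    _ = nhPotential α R + (1 - α) * α / 4 * ∑ i, nhWeight α (R i) * (g i - gA)
          + 17 / 20 * α * (2 * N - nhPotential α R) := by
        simp only [Finset.sum_add_distrib, ← Finset.mul_sum, Finset.sum_sub_distrib,
          Finset.sum_const, Finset.card_univ, Fintype.card_fin, nsmul_eq_mul, nhPotential]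
        ring
    _ = nhPotential α R + 17 / 20 * α * (2 * N - nhPotential α R) := by
        rw [sum_nhWeight_mul_sub_eq_zero, mul_zero, add_zero]

end Potential

lemma mul_lt_of_Phi_sqrt_mul_lt {α R M : ℝ} (hα : 0 < α) (hΦ : Phi (Real.sqrt α * R) < M)
    (hM : α * Real.log M < 1 / 800) : α * R < 1 / 10 := by
  rw [Phi_sqrt_mul hα] at hΦ
  split_ifs at hΦ with hR
  · have hM0 : 0 < M := (Real.exp_pos _).trans hΦ
    have hu := (Real.lt_log_iff_exp_lt hM0).2 hΦ
    nlinarith [mul_lt_mul_of_pos_left hu hα, mul_pos hα hR]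
  · nlinarith

theorem nhPotential_nhRegret_lt {N : ℕ} (hN : 0 < N) {α : ℝ} (hα : 0 < α) (hα5 : α ≤ 1 / 500)
    (hαN : α * Real.log (2 * N) < 1 / 800) {g : ℕ → Fin N → ℝ} (hg : ∀ j i, |g j i| ≤ 1)
    (j : ℕ) : nhPotential α (nhRegret α g j) < 2 * N := by
  have hN' : (0 : ℝ) < N := Nat.cast_pos.2 hN
  induction j with
  | zero => rw [show nhRegret α g 0 = fun _ => 0 from rfl, nhPotential_zero]; linarith
  | succ j ih =>
    have hR : ∀ i, α * nhRegret α g j i < 1 / 10 := fun i =>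
      mul_lt_of_Phi_sqrt_mul_lt hα (lt_of_le_of_lt (Finset.single_le_sum
        (f := fun k => Phi (Real.sqrt α * nhRegret α g j k))
        (fun k _ => zero_le_one.trans (one_le_Phi _)) (Finset.mem_univ i)) ih) hαN
    rw [nhRegret_succ]
    nlinarith [nhPotential_nhUpdate_le hα hα5 (hg j) hR]

theorem normalHedge_average_potential_bound :
    ∃ C : ℝ, 0 < C ∧ C ≤ 2.32 ∧
      ∀ (N : ℕ), 1 ≤ N →
      ∀ α : ℝ, 0 < α → α < 1 / (800 * Real.log (C * N)) →
      ∀ g : ℕ → Fin N → ℝ, (∀ j i, g j i ∈ Set.Icc (-1 : ℝ) 1) →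
      ∀ j : ℕ,
        (1 / (N : ℝ)) * ∑ i, Phi (Real.sqrt α * nhRegret α g j i) < C := by
  refine ⟨2, by norm_num, by norm_num, fun N hN α hα hαN g hg j => ?_⟩
  have hN' : (1 : ℝ) ≤ N := Nat.one_le_cast.2 hN
  have hlog : Real.log 2 ≤ Real.log (2 * N) := Real.log_le_log two_pos (by linarith)
  have hlog2 := Real.log_two_gt_d9
  have hαlog : α * Real.log (2 * N) < 1 / 800 := by
    rw [lt_div_iff₀ (by linarith)] at hαN
    linarith
  have hα5 : α ≤ 1 / 500 := by nlinarith
  have hpot := nhPotential_nhRegret_lt hN hα hα5 hαlog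
    (fun j i => abs_le.2 (hg j i)) j
  rw [one_div_mul_eq_div, div_lt_iff₀ (by linarith)]
  exact hpot
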